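/- arXiv:1704.03657 — 2 statements merged into one kernel-verified Lean document; each statement's English description precedes it below -/
import Mathlib

section
/- Let R be a commutative ring and O = M₂(R) × M₂(R) the split octonion algebra with multiplication (x,y) ∘ (z,w) = (xz + w·y*, x*·w + z·y). Define the norm N(x,y) = det x − det y. Then N is multiplicative: N((x,y) ∘ (z,w)) = N(x,y) · N(z,w) for all x, y, z, w ∈ M₂(R). -/
open Matrix

/-- Split octonions: pairs of 2×2 matrices. -/
abbrev Oct (R : Type*) [CommRing R] := Matrix (Fin 2) (Fin 2) R × Matrix (Fin 2) (Fin 2) R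

/-- Split octonion multiplication `(x,y) ∘ (z,w) = (xz + w·y*, x*·w + z·y)`. -/
def omul {R : Type*} [CommRing R] (a b : Oct R) : Oct R :=
  (a.1 * b.1 + b.2 * a.2.adjugate, a.1.adjugate * b.2 + b.1 * a.2)

/-- The split octonion unit `1_O = (I, 0)`. -/
def oone {R : Type*} [CommRing R] : Oct R := (1, 0)

/-- The norm `N(x,y) = det x − det y`. -/
def onorm {R : Type*} [CommRing R] (a : Oct R) : R := a.1.det - a.2.det

/-- Conjugation `(x,y)^∨ = (x*, −y)`. -/
def oconj {R : Type*} [CommRing R] (a : Oct R) : Oct R := (a.1.adjugate, -a.2)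

/-- The trace `Tr(x,y) = tr(x)`. -/
def otr {R : Type*} [CommRing R] (a : Oct R) : R := a.1.trace

/-- the norm of the split octonions is multiplicative. -/
theorem onorm_omul {R : Type*} [CommRing R] (x y z w : Matrix (Fin 2) (Fin 2) R) :
    onorm (omul (x, y) (z, w)) = onorm (x, y) * onorm (z, w) := by
  simp [onorm, omul, Matrix.det_fin_two, Matrix.adjugate_fin_two, Matrix.mul_apply, Matrix.add_apply, Fin.sum_univ_two, Matrix.vecMul, dotProduct, Matrix.cons_val_zero, Matrix.cons_val_one, Matrix.head_cons]
  ring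
end

section
/- Let R be a commutative ring and g ∈ SL₃(R). Define Φ(g) on the Zorn vector matrix algebra by Φ(g)([[a₁,u],[v,a₂]]) = [[a₁, g·u],[(gᵀ)⁻¹·v, a₂]]. Then Φ(g) is an R-algebra automorphism of the Zorn algebra (it preserves the Zorn product and the unit), and it fixes the diagonal subalgebra {[[a₁,0],[0,a₂]]} pointwise. -/
open Matrix

/-- Elements of the Zorn vector matrix algebra, written `(a₁, u, v, a₂)`
for the vector matrix `[[a₁, u],[v, a₂]]`. -/
abbrev Zorn (R : Type*) [CommRing R] := R × (Fin 3 → R) × (Fin 3 → R) × R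

/-- The Zorn vector matrix product. -/
def zmul {R : Type*} [CommRing R] (A B : Zorn R) : Zorn R :=
  (A.1 * B.1 - A.2.1 ⬝ᵥ B.2.2.1,
   A.1 • B.2.1 + B.2.2.2 • A.2.1 + crossProduct A.2.2.1 B.2.2.1,
   B.1 • A.2.2.1 + A.2.2.2 • B.2.2.1 + crossProduct A.2.1 B.2.1,
   -(B.2.1 ⬝ᵥ A.2.2.1) + A.2.2.2 * B.2.2.2)

/-- The identity vector matrix `[[1,0],[0,1]]`. -/
def zone {R : Type*} [CommRing R] : Zorn R := (1, 0, 0, 1)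

/-- The Zorn norm `N([[a₁,u],[v,a₂]]) = a₁a₂ + ⟨v,u⟩`. -/
def znorm {R : Type*} [CommRing R] (A : Zorn R) : R := A.1 * A.2.2.2 + A.2.2.1 ⬝ᵥ A.2.1

/-!
`Φ(g)` acts on `u` by `g` and on `v` by the contragredient `g⁻ᵀ`. The pairings `⟨u, v'⟩`
in the Zorn product are invariant because these two actions are dual to each other, and the
cross products transform correctly because `Mu × Mv = cof(M)(u × v)`, where the cofactor
matrix `cof(M) = adj(Mᵀ)` equals `M⁻ᵀ` when `det M = 1`; applied to `M = g` and `M = g⁻ᵀ`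
(whose contragredient is `g`) this covers both vector slots. Bijectivity follows from
`Φ(g) ∘ Φ(h) = Φ(gh)`.
-/

theorem crossProduct_mulVec {R : Type*} [CommRing R] (M : Matrix (Fin 3) (Fin 3) R)
    (u v : Fin 3 → R) :
    (M *ᵥ u) ⨯₃ (M *ᵥ v) = Mᵀ.adjugate *ᵥ (u ⨯₃ v) := by
  ext i
  fin_cases i <;>
  · simp [crossProduct, mulVec, dotProduct, adjugate_fin_three, Fin.sum_univ_three]
    ring

theorem crossProduct_mulVec_of_det_eq_one {R : Type*} [CommRing R]
    {M : Matrix (Fin 3) (Fin 3) R} (hM : M.det = 1) (u v : Fin 3 → R) :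
    (M *ᵥ u) ⨯₃ (M *ᵥ v) = Mᵀ⁻¹ *ᵥ (u ⨯₃ v) := by
  rw [crossProduct_mulVec, inv_def, det_transpose, hM, Ring.inverse_one, one_smul]

theorem mulVec_dotProduct_transpose_inv_mulVec {n R : Type*} [Fintype n] [DecidableEq n]
    [CommRing R] {g : Matrix n n R} (hg : IsUnit g.det) (u v : n → R) :
    (g *ᵥ u) ⬝ᵥ (gᵀ⁻¹ *ᵥ v) = u ⬝ᵥ v := by
  have hgT : IsUnit gᵀ.det := by rwa [det_transpose]
  rw [dotProduct_mulVec, ← vecMul_transpose, vecMul_vecMul, mul_nonsing_inv _ hgT, vecMul_one]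

section Phi

variable {R : Type*} [CommRing R]

noncomputable def zornPhi (g : Matrix (Fin 3) (Fin 3) R) (A : Zorn R) : Zorn R :=
  (A.1, g *ᵥ A.2.1, gᵀ⁻¹ *ᵥ A.2.2.1, A.2.2.2)

theorem zornPhi_zmul {g : Matrix (Fin 3) (Fin 3) R} (hg : g.det = 1) (A B : Zorn R) :
    zornPhi g (zmul A B) = zmul (zornPhi g A) (zornPhi g B) := by
  have hgu : IsUnit g.det := hg ▸ isUnit_one
  have hgT_inv : gᵀ⁻¹.det = 1 := by rw [det_nonsing_inv, det_transpose, hg, Ring.inverse_one]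
  have hgT_inv_T_inv : (gᵀ⁻¹)ᵀ⁻¹ = g := by
    rw [transpose_nonsing_inv, transpose_transpose, nonsing_inv_nonsing_inv _ hgu]
  simp only [zornPhi, zmul, mulVec_add, mulVec_smul,
    mulVec_dotProduct_transpose_inv_mulVec hgu, crossProduct_mulVec_of_det_eq_one hg,
    crossProduct_mulVec_of_det_eq_one hgT_inv, hgT_inv_T_inv]

theorem zornPhi_zone (g : Matrix (Fin 3) (Fin 3) R) : zornPhi g zone = zone := by
  simp [zornPhi, zone]

theorem zornPhi_one : zornPhi (1 : Matrix (Fin 3) (Fin 3) R) = id := by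
  ext A <;> simp [zornPhi]

theorem zornPhi_comp (g h : Matrix (Fin 3) (Fin 3) R) :
    zornPhi g ∘ zornPhi h = zornPhi (g * h) := by
  ext A <;> simp [zornPhi, transpose_mul, Matrix.mul_inv_rev]

theorem zornPhi_bijective {g : Matrix (Fin 3) (Fin 3) R} (hg : IsUnit g.det) :
    Function.Bijective (zornPhi g) := by
  refine Function.bijective_iff_has_inverse.mpr ⟨zornPhi g⁻¹, ?_, ?_⟩
  · rw [Function.leftInverse_iff_comp, zornPhi_comp, nonsing_inv_mul _ hg, zornPhi_one]
  · rw [Function.rightInverse_iff_comp, zornPhi_comp, mul_nonsing_inv _ hg, zornPhi_one]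

theorem zornPhi_smul_add (g : Matrix (Fin 3) (Fin 3) R) (r : R) (A B : Zorn R) :
    zornPhi g (r • A + B) = r • zornPhi g A + zornPhi g B := by
  simp [zornPhi, mulVec_add, mulVec_smul]

theorem zornPhi_diagonal (g : Matrix (Fin 3) (Fin 3) R) (a₁ a₂ : R) :
    zornPhi g (a₁, 0, 0, a₂) = (a₁, 0, 0, a₂) := by
  simp [zornPhi]

end Phi

/-- for `g ∈ SL₃(R)`, the map
`Φ(g)([[a₁,u],[v,a₂]]) = [[a₁, g·u],[(gᵀ)⁻¹·v, a₂]]` is an `R`-algebra automorphism of the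
Zorn algebra (it preserves the Zorn product and the unit), and it fixes the diagonal
subalgebra pointwise. -/
theorem zorn_Phi_automorphism {R : Type*} [CommRing R] (g : Matrix (Fin 3) (Fin 3) R)
    (hg : g.det = 1) :
    let Phi : Zorn R → Zorn R :=
      fun A => (A.1, g.mulVec A.2.1, (gᵀ)⁻¹.mulVec A.2.2.1, A.2.2.2)
    (∀ A B : Zorn R, Phi (zmul A B) = zmul (Phi A) (Phi B)) ∧
    Phi zone = zone ∧
    Function.Bijective Phi ∧
    (∀ (r : R) (A B : Zorn R), Phi (r • A + B) = r • Phi A + Phi B) ∧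
    (∀ a₁ a₂ : R, Phi (a₁, 0, 0, a₂) = (a₁, 0, 0, a₂)) :=
  ⟨zornPhi_zmul hg, zornPhi_zone g, zornPhi_bijective (hg ▸ isUnit_one),
    zornPhi_smul_add g, zornPhi_diagonal g⟩
end
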